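/- arXiv:2604.16282 — 2 statements merged into one kernel-verified Lean document; each statement's English description precedes it below -/
import Mathlib

section
/- The ρ-metric is strictly weaker than the H¹ norm: on Ω = (0,1)^d with s ∈ (0,1) and 0 < a < 1−s, the sequence φ_k(z) = (z₁ − (a/k)cos(k z₁), z₂, …, z_d) lies in E^d(s), satisfies ρ(φ_k, id) → 0, but ‖Dφ_k − D(id)‖²_{L²} → (a²/2)|Ω| > 0, so φ_k does not converge to the identity in H¹. -/
open MeasureTheory Filter Topology Matrix

noncomputable def frobSq {m n : ℕ} (A : Matrix (Fin m) (Fin n) ℝ) : ℝ :=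
  ∑ i, ∑ j, A i j ^ 2

noncomputable def frob {m n : ℕ} (A : Matrix (Fin m) (Fin n) ℝ) : ℝ :=
  Real.sqrt (frobSq A)

noncomputable def frobInner {m n : ℕ} (A B : Matrix (Fin m) (Fin n) ℝ) : ℝ :=
  ∑ i, ∑ j, A i j * B i j

noncomputable def evnorm {n : ℕ} (v : Fin n → ℝ) : ℝ :=
  Real.sqrt (∑ i, v i ^ 2)

noncomputable def sigmaMin {m n : ℕ} (A : Matrix (Fin m) (Fin n) ℝ) : ℝ :=
  sInf {r : ℝ | ∃ v : Fin n → ℝ, evnorm v = 1 ∧ r = evnorm (A.mulVec v)}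

noncomputable def sigmaMax {m n : ℕ} (A : Matrix (Fin m) (Fin n) ℝ) : ℝ :=
  sSup {r : ℝ | ∃ v : Fin n → ℝ, evnorm v = 1 ∧ r = evnorm (A.mulVec v)}

noncomputable def proj {m n : ℕ} (X : Matrix (Fin m) (Fin n) ℝ) : Matrix (Fin m) (Fin m) ℝ :=
  X * (Xᵀ * X)⁻¹ * Xᵀ

noncomputable def jac {n m : ℕ} (f : (Fin n → ℝ) → (Fin m → ℝ)) (z : Fin n → ℝ) :
    Matrix (Fin m) (Fin n) ℝ :=
  Matrix.of fun i j => fderiv ℝ f z (Pi.single j 1) i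

noncomputable def hess {n : ℕ} (f : (Fin n → ℝ) → ℝ) (z : Fin n → ℝ) :
    Matrix (Fin n) (Fin n) ℝ :=
  Matrix.of fun k l => fderiv ℝ (fun x => fderiv ℝ f x (Pi.single l 1)) z (Pi.single k 1)

noncomputable def rho {d D : ℕ} (Ω : Set (Fin d → ℝ)) (φ ψ : (Fin d → ℝ) → (Fin D → ℝ)) : ℝ :=
  Real.sqrt (∫ z in Ω,
    (evnorm (φ z - ψ z) ^ 2 + (1/2) * frobSq (proj (jac φ z) - proj (jac ψ z))))

/-!
The map `wrinkle a c` moves only the first coordinate, by `(a / c) cos (c z₀)`, so it is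
`O(a / c)`-close to the identity, while its Jacobian `diag (1 + a sin (c z₀), 1, …, 1)` does not
approach the identity. As `|a| < 1` that Jacobian is invertible, hence has the same tangent
projection as the identity, and its singular values are at least `1 - |a|`. Thus `ρ(wrinkle, id)²`
only sees the `L²` distance `(a / c)² ∫ cos² (c t) → 0`, whereas the `H¹` defect
`a² ∫ sin² (c t) = a² (1/2 - sin c cos c / (2c))` tends to `a² / 2`.
-/

open Real

lemma jac_id {d : ℕ} (z : Fin d → ℝ) : jac (fun w : Fin d → ℝ => w) z = 1 := by
  ext i j
  simp [jac, Pi.single_apply, Matrix.one_apply]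

lemma jac_apply_of_differentiableAt {n m : ℕ} {f : (Fin n → ℝ) → (Fin m → ℝ)}
    {z : Fin n → ℝ} (hf : DifferentiableAt ℝ f z) (i : Fin m) (j : Fin n) :
    jac f z i j = fderiv ℝ (fun w => f w i) z (Pi.single j 1) := by
  rw [fderiv_apply hf i]
  rfl

lemma proj_of_isUnit_det {n : ℕ} {X : Matrix (Fin n) (Fin n) ℝ} (hX : IsUnit X.det) :
    proj X = 1 := by
  have hXt : IsUnit Xᵀ.det := by rwa [Matrix.det_transpose]
  rw [proj, Matrix.mul_inv_rev, ← Matrix.mul_assoc, Matrix.mul_nonsing_inv _ hX, Matrix.one_mul,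
    Matrix.nonsing_inv_mul _ hXt]

lemma frobSq_diagonal {n : ℕ} (v : Fin n → ℝ) :
    frobSq (diagonal v) = ∑ i, v i ^ 2 := by
  refine Finset.sum_congr rfl fun i _ => ?_
  rw [Finset.sum_eq_single i (fun j _ hj => by simp [diagonal_apply_ne _ hj.symm])
    (by simp)]
  simp

lemma evnorm_sq {n : ℕ} (v : Fin n → ℝ) : evnorm v ^ 2 = ∑ i, v i ^ 2 :=
  Real.sq_sqrt (Finset.sum_nonneg fun i _ => sq_nonneg (v i))

lemma evnorm_single_one {n : ℕ} (i : Fin n) : evnorm (Pi.single i (1 : ℝ)) = 1 := by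
  rw [evnorm, Finset.sum_eq_single i (fun j _ hj => by simp [hj]) (by simp)]
  simp

lemma le_sigmaMin_diagonal {n : ℕ} [NeZero n] {s : ℝ} (hs : 0 ≤ s) {v : Fin n → ℝ}
    (hv : ∀ i, s ≤ |v i|) : s ≤ sigmaMin (diagonal v) := by
  refine le_csInf ⟨_, Pi.single 0 1, evnorm_single_one 0, rfl⟩ ?_
  rintro r ⟨w, hw, rfl⟩
  rw [← Real.sqrt_sq hs, evnorm]
  simp only [mulVec_diagonal]
  refine Real.sqrt_le_sqrt ?_
  calc s ^ 2 = ∑ i, s ^ 2 * w i ^ 2 := by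
        rw [← Finset.mul_sum, ← evnorm_sq, hw, one_pow, mul_one]
    _ ≤ ∑ i, (v i * w i) ^ 2 := Finset.sum_le_sum fun i _ => by
      rw [mul_pow, ← sq_abs (v i)]
      gcongr
      exact hv i

lemma setIntegral_pi_Ioo_comp_eval {ι : Type*} [Fintype ι] (i : ι) {g : ℝ → ℝ}
    (hg : AEStronglyMeasurable g (volume.restrict (Set.Ioo 0 1))) :
    ∫ z in Set.univ.pi (fun _ : ι => Set.Ioo (0 : ℝ) 1), g (z i)
      = ∫ t in (0 : ℝ)..1, g t := by
  have : IsProbabilityMeasure (volume.restrict (Set.Ioo (0 : ℝ) 1)) := ⟨by simp⟩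
  rw [volume_pi, Measure.restrict_pi_pi, integral_comp_eval hg,
    intervalIntegral.integral_of_le zero_le_one, integral_Ioc_eq_integral_Ioo]

lemma integral_sin_mul_sq {c : ℝ} (hc : c ≠ 0) :
    ∫ t in (0 : ℝ)..1, sin (c * t) ^ 2 = 1 / 2 - sin c * cos c / (2 * c) := by
  rw [intervalIntegral.integral_comp_mul_left (fun u => sin u ^ 2) hc, mul_zero, mul_one,
    integral_sin_sq, sin_zero, cos_zero, smul_eq_mul]
  field_simp
  ring

lemma integral_cos_mul_sq {c : ℝ} (hc : c ≠ 0) :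
    ∫ t in (0 : ℝ)..1, cos (c * t) ^ 2 = 1 / 2 + sin c * cos c / (2 * c) := by
  rw [intervalIntegral.integral_comp_mul_left (fun u => cos u ^ 2) hc, mul_zero, mul_one,
    integral_cos_sq, sin_zero, cos_zero, smul_eq_mul]
  field_simp
  ring

lemma tendsto_sin_mul_cos_div_atTop :
    Tendsto (fun x => sin x * cos x / (2 * x)) atTop (𝓝 0) := by
  have hinv : Tendsto (fun x : ℝ => (2 * x)⁻¹) atTop (𝓝 0) :=
    tendsto_inv_atTop_zero.comp (tendsto_id.const_mul_atTop two_pos)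
  have hbdd : IsBoundedUnder (· ≤ ·) atTop fun x => ‖sin x * cos x‖ :=
    isBoundedUnder_of ⟨1, fun x => by
      rw [norm_mul]
      exact mul_le_one₀ (abs_sin_le_one x) (norm_nonneg _) (abs_cos_le_one x)⟩
  simpa only [div_eq_inv_mul] using hinv.zero_mul_isBoundedUnder_le hbdd

noncomputable def wrinkle {d : ℕ} [NeZero d] (a c : ℝ) (z : Fin d → ℝ) : Fin d → ℝ :=
  fun i => if i = 0 then z 0 - a / c * cos (c * z 0) else z i

noncomputable def wrinkleSlope {d : ℕ} [NeZero d] (a c : ℝ) (z : Fin d → ℝ) :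
    Fin d → ℝ :=
  fun i => if i = 0 then 1 + a * sin (c * z 0) else 1

section wrinkle

variable {d : ℕ} [NeZero d] {a c : ℝ}

lemma one_sub_abs_le_wrinkleSlope (z : Fin d → ℝ) (i : Fin d) :
    1 - |a| ≤ wrinkleSlope a c z i := by
  unfold wrinkleSlope
  split_ifs
  · have h := mul_le_of_le_one_right (abs_nonneg a) (abs_sin_le_one (c * z 0))
    rw [← abs_mul] at h
    linarith [neg_abs_le (a * sin (c * z 0))]
  · linarith [abs_nonneg a]

lemma hasDerivAt_sub_div_mul_cos (hc : c ≠ 0) (t : ℝ) :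
    HasDerivAt (fun t => t - a / c * cos (c * t)) (1 + a * sin (c * t)) t := by
  refine ((hasDerivAt_id' t).sub
    (((hasDerivAt_id' t).const_mul c).cos.const_mul (a / c))).congr_deriv ?_
  field_simp
  ring

lemma differentiable_wrinkle : Differentiable ℝ (wrinkle (d := d) a c) := by
  intro z
  refine differentiableAt_pi.2 fun i => ?_
  unfold wrinkle
  split_ifs <;> fun_prop

lemma jac_wrinkle (hc : c ≠ 0) (z : Fin d → ℝ) :
    jac (wrinkle a c) z = diagonal (wrinkleSlope a c z) := by
  ext i j
  rw [jac_apply_of_differentiableAt (differentiable_wrinkle z)]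
  rcases eq_or_ne i 0 with rfl | hi
  · have h : HasFDerivAt (fun w : Fin d → ℝ => wrinkle a c w 0)
        ((1 + a * sin (c * z 0)) •
          ContinuousLinearMap.proj (R := ℝ) (φ := fun _ : Fin d => ℝ) 0) z := by
      simpa [wrinkle, Function.comp_def] using
        (hasDerivAt_sub_div_mul_cos hc (z 0)).comp_hasFDerivAt z
          (hasFDerivAt_apply (𝕜 := ℝ) (0 : Fin d) z)
    rw [h.fderiv]
    simp [wrinkleSlope, Pi.single_apply, diagonal_apply, eq_comm]
  · simp only [wrinkle, if_neg hi]
    rw [(hasFDerivAt_apply i z).fderiv]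
    simp [wrinkleSlope, Pi.single_apply, diagonal_apply, hi]

lemma le_sigmaMin_jac_wrinkle {s : ℝ} (hs : 0 ≤ s) (ha : |a| ≤ 1 - s) (hc : c ≠ 0)
    (z : Fin d → ℝ) : s ≤ sigmaMin (jac (wrinkle a c) z) := by
  rw [jac_wrinkle hc]
  refine le_sigmaMin_diagonal hs fun i => le_abs.2 (Or.inl ?_)
  linarith [one_sub_abs_le_wrinkleSlope (a := a) (c := c) z i]

lemma proj_jac_wrinkle (ha : |a| < 1) (hc : c ≠ 0) (z : Fin d → ℝ) :
    proj (jac (wrinkle a c) z) = 1 := by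
  refine proj_of_isUnit_det ?_
  rw [jac_wrinkle hc, det_diagonal, isUnit_iff_ne_zero]
  exact Finset.prod_ne_zero_iff.2 fun i _ => by
    linarith [one_sub_abs_le_wrinkleSlope (a := a) (c := c) z i]

lemma frobSq_jac_wrinkle_sub_jac_id (hc : c ≠ 0) (z : Fin d → ℝ) :
    frobSq (jac (wrinkle a c) z - jac (fun w => w) z) = a ^ 2 * sin (c * z 0) ^ 2 := by
  rw [jac_wrinkle hc, jac_id, ← diagonal_one, diagonal_sub, frobSq_diagonal,
    Finset.sum_eq_single 0 (fun i _ hi => by simp [wrinkleSlope, hi]) (by simp)]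
  simp [wrinkleSlope, mul_pow]

lemma evnorm_wrinkle_sub_sq (z : Fin d → ℝ) :
    evnorm (wrinkle a c z - z) ^ 2 = (a / c) ^ 2 * cos (c * z 0) ^ 2 := by
  rw [evnorm_sq, Finset.sum_eq_single 0 (fun i _ hi => by simp [wrinkle, hi]) (by simp)]
  simp [wrinkle, mul_pow]

lemma integral_frobSq_jac_wrinkle_sub_jac_id (hc : c ≠ 0) :
    ∫ z in Set.univ.pi (fun _ => Set.Ioo 0 1),
        frobSq (jac (wrinkle a c) z - jac (fun w : Fin d → ℝ => w) z)
      = a ^ 2 * (1 / 2 - sin c * cos c / (2 * c)) := by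
  simp_rw [frobSq_jac_wrinkle_sub_jac_id hc]
  rw [setIntegral_pi_Ioo_comp_eval 0 (g := fun t => a ^ 2 * sin (c * t) ^ 2) (by fun_prop),
    intervalIntegral.integral_const_mul, integral_sin_mul_sq hc]

lemma rho_wrinkle_id (ha : |a| < 1) (hc : c ≠ 0) :
    rho (Set.univ.pi fun _ => Set.Ioo 0 1) (wrinkle (d := d) a c) (fun z => z)
      = √((a / c) ^ 2 * (1 / 2 + sin c * cos c / (2 * c))) := by
  have hproj_one : proj (1 : Matrix (Fin d) (Fin d) ℝ) = 1 := proj_of_isUnit_det (by simp)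
  have hfrob_zero : frobSq (0 : Matrix (Fin d) (Fin d) ℝ) = 0 := by simp [frobSq]
  simp_rw [rho, proj_jac_wrinkle ha hc, jac_id, hproj_one, sub_self, hfrob_zero, mul_zero,
    add_zero, evnorm_wrinkle_sub_sq]
  rw [setIntegral_pi_Ioo_comp_eval 0 (g := fun t => (a / c) ^ 2 * cos (c * t) ^ 2) (by fun_prop),
    intervalIntegral.integral_const_mul, integral_cos_mul_sq hc]

end wrinkle

theorem stmt8_general {d : ℕ} [NeZero d] (s a : ℝ) (hs0 : 0 < s)
    (ha0 : 0 < a) (ha : a < 1 - s) :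
    let Ω : Set (Fin d → ℝ) := Set.univ.pi fun _ => Set.Ioo (0:ℝ) 1
    let φseq : ℕ → (Fin d → ℝ) → (Fin d → ℝ) := fun k z i =>
      if i = 0 then z 0 - (a / ((k:ℝ)+1)) * Real.cos (((k:ℝ)+1) * z 0) else z i
    (∀ k z, s ≤ sigmaMin (jac (φseq k) z)) ∧
    Tendsto (fun k => rho Ω (φseq k) (fun z => z)) atTop (𝓝 0) ∧
    Tendsto (fun k => ∫ z in Ω, frobSq (jac (φseq k) z - jac (fun w => w) z)) atTop
      (𝓝 (a ^ 2 / 2)) ∧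
    ¬ Tendsto (fun k => ∫ z in Ω, frobSq (jac (φseq k) z - jac (fun w => w) z)) atTop
      (𝓝 0) := by
  intro Ω φseq
  have habs : |a| ≤ 1 - s := (abs_of_pos ha0).trans_le ha.le
  have hc : ∀ k : ℕ, (k : ℝ) + 1 ≠ 0 := fun k => by positivity
  have hc_top : Tendsto (fun k : ℕ => (k : ℝ) + 1) atTop atTop :=
    tendsto_atTop_add_const_right _ 1 tendsto_natCast_atTop_atTop
  have hosc := tendsto_sin_mul_cos_div_atTop.comp hc_top
  have hH1 : Tendsto (fun k => ∫ z in Ω, frobSq (jac (φseq k) z - jac (fun w => w) z)) atTop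
      (𝓝 (a ^ 2 / 2)) := by
    have hlim := (tendsto_const_nhds (x := (1 : ℝ) / 2)).sub hosc |>.const_mul (a ^ 2)
    rw [sub_zero, ← mul_div_assoc, mul_one] at hlim
    exact hlim.congr fun k => (integral_frobSq_jac_wrinkle_sub_jac_id (hc k)).symm
  refine ⟨fun k z => le_sigmaMin_jac_wrinkle hs0.le habs (hc k) z, ?_, hH1, fun h0 => ?_⟩
  · have hlim := (((tendsto_const_nhds (x := a)).div_atTop hc_top).pow 2).mul
      ((tendsto_const_nhds (x := (1 : ℝ) / 2)).add hosc) |>.sqrt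
    rw [zero_pow two_ne_zero, zero_mul, Real.sqrt_zero] at hlim
    exact hlim.congr fun k => (rho_wrinkle_id (by linarith) (hc k)).symm
  · exact ha0.ne' (by simpa using tendsto_nhds_unique hH1 h0)

theorem stmt8 {d : ℕ} [NeZero d] (s a : ℝ) (hs0 : 0 < s) (hs1 : s < 1)
    (ha0 : 0 < a) (ha : a < 1 - s) :
    let Ω : Set (Fin d → ℝ) := Set.univ.pi fun _ => Set.Ioo (0:ℝ) 1
    let φseq : ℕ → (Fin d → ℝ) → (Fin d → ℝ) := fun k z i =>
      if i = 0 then z 0 - (a / ((k:ℝ)+1)) * Real.cos (((k:ℝ)+1) * z 0) else z i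
    (∀ k z, s ≤ sigmaMin (jac (φseq k) z)) ∧
    Tendsto (fun k => rho Ω (φseq k) (fun z => z)) atTop (𝓝 0) ∧
    Tendsto (fun k => ∫ z in Ω, frobSq (jac (φseq k) z - jac (fun w => w) z)) atTop
      (𝓝 (a ^ 2 / 2)) ∧
    ¬ Tendsto (fun k => ∫ z in Ω, frobSq (jac (φseq k) z - jac (fun w => w) z)) atTop
      (𝓝 0) :=
  stmt8_general s a hs0 ha0 ha
end

section
/- Let X, Y ∈ R^{D×d} satisfy s ≤ σ_min(X), σ_min(Y) and σ_max(X), σ_max(Y) ≤ R. Then the Moore–Penrose pseudo-inverses satisfy ‖X^† − Y^†‖_F ≤ (s^{-2} + √2 R² s^{-4}) ‖X − Y‖_F, and ‖X^†‖_2 ≤ 1/s. -/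
open MeasureTheory Filter Topology Matrix

/-
With `X⁺ = (XᵀX)⁻¹Xᵀ` and the orthogonal projection `P_Y = Y Y⁺`, one has
`X⁺ - Y⁺ = (XᵀX)⁻¹ (X - Y)ᵀ (1 - P_Y) - X⁺ (X - Y) Y⁺`.
The lower bound `s` on the singular values gives `‖X⁺‖₂, ‖(Y⁺)ᵀ‖₂ ≤ 1/s` and
`‖(XᵀX)⁻¹‖₂ ≤ 1/s²`, while `‖1 - P_Y‖₂ ≤ 1`. Since `‖A B‖_F ≤ ‖A‖₂ ‖B‖_F`, each term is at
most `‖X - Y‖_F / s²`, and `2/s² ≤ 1/s² + √2 R²/s⁴` because `s ≤ σ_min X ≤ σ_max X ≤ R`.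
-/

open scoped Matrix.Norms.Frobenius

section Norms

variable {m n p : ℕ}

lemma evnorm_eq_norm (v : Fin n → ℝ) :
    evnorm v = ‖(WithLp.toLp 2 v : EuclideanSpace ℝ (Fin n))‖ := by
  simp [evnorm, EuclideanSpace.norm_eq]

@[simp]
lemma evnorm_zero : evnorm (0 : Fin n → ℝ) = 0 := by
  simp [evnorm]

lemma evnorm_nonneg (v : Fin n → ℝ) : 0 ≤ evnorm v := Real.sqrt_nonneg _

lemma evnorm_pos {v : Fin n → ℝ} (hv : v ≠ 0) : 0 < evnorm v := by
  simpa [evnorm_eq_norm] using hv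

lemma evnorm_smul (c : ℝ) (v : Fin n → ℝ) : evnorm (c • v) = |c| * evnorm v := by
  simp [evnorm_eq_norm, norm_smul]

lemma evnorm_sq_eq_dotProduct (v : Fin n → ℝ) : evnorm v ^ 2 = v ⬝ᵥ v := by
  rw [evnorm_eq_norm, ← real_inner_self_eq_norm_sq, EuclideanSpace.inner_toLp_toLp]
  simp

lemma dotProduct_le_evnorm_mul_evnorm (v w : Fin n → ℝ) : v ⬝ᵥ w ≤ evnorm v * evnorm w := by
  rw [evnorm_eq_norm, evnorm_eq_norm]
  simpa [EuclideanSpace.inner_toLp_toLp, dotProduct_comm] using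
    real_inner_le_norm (WithLp.toLp 2 v : EuclideanSpace ℝ (Fin n)) (WithLp.toLp 2 w)

lemma frob_eq_norm (A : Matrix (Fin m) (Fin n) ℝ) : frob A = ‖A‖ := by
  rw [frob, frobSq, Matrix.frobenius_norm_def, Real.sqrt_eq_rpow]
  simp

lemma frob_nonneg (A : Matrix (Fin m) (Fin n) ℝ) : 0 ≤ frob A := Real.sqrt_nonneg _

lemma frob_transpose (A : Matrix (Fin m) (Fin n) ℝ) : frob Aᵀ = frob A := by
  rw [frob_eq_norm, frob_eq_norm]
  exact Matrix.frobenius_norm_transpose A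

lemma evnorm_mulVec_le_frob_mul (A : Matrix (Fin m) (Fin n) ℝ) (v : Fin n → ℝ) :
    evnorm (A *ᵥ v) ≤ frob A * evnorm v := by
  rw [evnorm_eq_norm, evnorm_eq_norm, frob_eq_norm,
    ← Matrix.frobenius_norm_replicateCol (ι := Fin 1),
    ← Matrix.frobenius_norm_replicateCol (ι := Fin 1) v, Matrix.replicateCol_mulVec]
  exact Matrix.frobenius_norm_mul _ _

lemma frob_sq_eq_sum_evnorm_sq (A : Matrix (Fin m) (Fin n) ℝ) :
    frob A ^ 2 = ∑ j, evnorm (Aᵀ j) ^ 2 := by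
  rw [frob, frobSq, Finset.sum_comm, Real.sq_sqrt (by positivity)]
  refine Finset.sum_congr rfl fun j _ => ?_
  rw [evnorm, Real.sq_sqrt (by positivity)]
  rfl

lemma frob_mul_le_of_evnorm_mulVec_le (M : Matrix (Fin p) (Fin m) ℝ)
    (A : Matrix (Fin m) (Fin n) ℝ) {c : ℝ} (hc : 0 ≤ c)
    (hM : ∀ v, evnorm (M *ᵥ v) ≤ c * evnorm v) : frob (M * A) ≤ c * frob A := by
  have hcol : ∀ j, (M * A)ᵀ j = M *ᵥ Aᵀ j := fun j => by
    ext i; simp [Matrix.mul_apply, Matrix.mulVec, dotProduct]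
  have hsq : frob (M * A) ^ 2 ≤ (c * frob A) ^ 2 := by
    rw [mul_pow, frob_sq_eq_sum_evnorm_sq, frob_sq_eq_sum_evnorm_sq, Finset.mul_sum]
    refine Finset.sum_le_sum fun j _ => ?_
    rw [hcol, ← mul_pow]
    exact pow_le_pow_left₀ (evnorm_nonneg _) (hM _) 2
  exact (pow_le_pow_iff_left₀ (frob_nonneg _) (mul_nonneg hc (frob_nonneg A))
    two_ne_zero).mp hsq

lemma frob_mul_le_of_evnorm_transpose_mulVec_le (A : Matrix (Fin m) (Fin n) ℝ)
    (N : Matrix (Fin n) (Fin p) ℝ) {c : ℝ} (hc : 0 ≤ c)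
    (hN : ∀ v, evnorm (Nᵀ *ᵥ v) ≤ c * evnorm v) : frob (A * N) ≤ c * frob A := by
  rw [← frob_transpose (A * N), ← frob_transpose A, Matrix.transpose_mul]
  exact frob_mul_le_of_evnorm_mulVec_le Nᵀ Aᵀ hc hN

end Norms

section SingularValues

variable {m n : ℕ}

lemma mul_evnorm_le_evnorm_mulVec_of_le_sigmaMin {A : Matrix (Fin m) (Fin n) ℝ} {s : ℝ}
    (hA : s ≤ sigmaMin A) (v : Fin n → ℝ) : s * evnorm v ≤ evnorm (A *ᵥ v) := by
  rcases eq_or_ne v 0 with rfl | hv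
  · simp
  have hpos := evnorm_pos hv
  have hunit : evnorm ((evnorm v)⁻¹ • v) = 1 := by
    rw [evnorm_smul, abs_of_pos (inv_pos.mpr hpos), inv_mul_cancel₀ hpos.ne']
  have hmin : sigmaMin A ≤ evnorm (A *ᵥ ((evnorm v)⁻¹ • v)) :=
    csInf_le ⟨0, fun _ ⟨_, _, hr⟩ => hr ▸ evnorm_nonneg _⟩ ⟨_, hunit, rfl⟩
  rw [Matrix.mulVec_smul, evnorm_smul, abs_of_pos (inv_pos.mpr hpos)] at hmin
  rw [← le_inv_mul_iff₀' hpos]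
  exact hA.trans hmin

lemma sigmaMax_le_of_evnorm_mulVec_le {A : Matrix (Fin m) (Fin n) ℝ} {c : ℝ} (hc : 0 ≤ c)
    (hA : ∀ v, evnorm (A *ᵥ v) ≤ c * evnorm v) : sigmaMax A ≤ c := by
  refine Real.sSup_le ?_ hc
  rintro _ ⟨v, hv, rfl⟩
  simpa [hv] using hA v

/-- For `n = 0` both sides are `0`, as `sInf ∅ = sSup ∅ = 0`. -/
lemma sigmaMin_le_sigmaMax (A : Matrix (Fin m) (Fin n) ℝ) : sigmaMin A ≤ sigmaMax A := by
  set S := {r : ℝ | ∃ v : Fin n → ℝ, evnorm v = 1 ∧ r = evnorm (A *ᵥ v)}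
  show sInf S ≤ sSup S
  rcases S.eq_empty_or_nonempty with hS | hS
  · rw [hS, Real.sInf_empty, Real.sSup_empty]
  refine csInf_le_csSup hS ⟨0, ?_⟩ ⟨frob A, ?_⟩ <;> rintro _ ⟨v, hv, rfl⟩
  · exact evnorm_nonneg _
  · simpa [hv] using evnorm_mulVec_le_frob_mul A v

end SingularValues

section PseudoInverse

variable {D d : ℕ}

lemma evnorm_mulVec_sq (X : Matrix (Fin D) (Fin d) ℝ) (v : Fin d → ℝ) :
    evnorm (X *ᵥ v) ^ 2 = v ⬝ᵥ ((Xᵀ * X) *ᵥ v) := by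
  rw [evnorm_sq_eq_dotProduct, ← Matrix.mulVec_mulVec, Matrix.dotProduct_mulVec v Xᵀ,
    Matrix.vecMul_transpose]

lemma evnorm_mulVec_le_of_transpose_mul_self_eq {Q : Matrix (Fin D) (Fin D) ℝ}
    (hQ : Qᵀ * Q = Q) (v : Fin D → ℝ) : evnorm (Q *ᵥ v) ≤ evnorm v := by
  have h : evnorm (Q *ᵥ v) ^ 2 ≤ evnorm (Q *ᵥ v) * evnorm v := by
    rw [evnorm_mulVec_sq, hQ, mul_comm]
    exact dotProduct_le_evnorm_mul_evnorm v _
  nlinarith [evnorm_nonneg (Q *ᵥ v), evnorm_nonneg v]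

lemma proj_transpose (X : Matrix (Fin D) (Fin d) ℝ) : (proj X)ᵀ = proj X := by
  rw [proj, Matrix.transpose_mul, Matrix.transpose_mul, Matrix.transpose_transpose,
    Matrix.transpose_nonsing_inv, Matrix.transpose_mul, Matrix.transpose_transpose,
    Matrix.mul_assoc]

lemma proj_mul_self {X : Matrix (Fin D) (Fin d) ℝ} (hX : IsUnit (Xᵀ * X).det) :
    proj X * proj X = proj X := by
  have h : Xᵀ * (X * ((Xᵀ * X)⁻¹ * Xᵀ)) = Xᵀ := by
    rw [← Matrix.mul_assoc, ← Matrix.mul_assoc, Matrix.mul_nonsing_inv _ hX, Matrix.one_mul]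
  simp only [proj, Matrix.mul_assoc, h]

lemma evnorm_one_sub_proj_mulVec_le {X : Matrix (Fin D) (Fin d) ℝ}
    (hX : IsUnit (Xᵀ * X).det) (v : Fin D → ℝ) : evnorm ((1 - proj X) *ᵥ v) ≤ evnorm v := by
  refine evnorm_mulVec_le_of_transpose_mul_self_eq ?_ v
  rw [Matrix.transpose_sub, Matrix.transpose_one, proj_transpose]
  simp only [Matrix.sub_mul, Matrix.mul_sub, Matrix.one_mul, Matrix.mul_one, proj_mul_self hX,
    sub_self, sub_zero]

variable {X : Matrix (Fin D) (Fin d) ℝ} {s : ℝ}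

lemma isUnit_det_transpose_mul_self (hs : 0 < s)
    (hX : ∀ v, s * evnorm v ≤ evnorm (X *ᵥ v)) : IsUnit (Xᵀ * X).det := by
  have hinj : Function.Injective X.mulVec := fun a b hab => by
    by_contra hne
    have h := hX (a - b)
    rw [Matrix.mulVec_sub, hab, sub_self, evnorm_zero] at h
    exact (mul_pos hs (evnorm_pos (sub_ne_zero.mpr hne))).not_ge h
  have hpos := Matrix.PosDef.conjTranspose_mul_self X hinj
  rw [Matrix.conjTranspose_eq_transpose_of_trivial] at hpos
  exact (Matrix.isUnit_iff_isUnit_det _).mp hpos.isUnit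

lemma evnorm_inv_mulVec_le (hs : 0 < s) (hX : ∀ v, s * evnorm v ≤ evnorm (X *ᵥ v))
    (v : Fin d → ℝ) : evnorm ((Xᵀ * X)⁻¹ *ᵥ v) ≤ 1 / s ^ 2 * evnorm v := by
  set w := (Xᵀ * X)⁻¹ *ᵥ v
  have hw : (Xᵀ * X) *ᵥ w = v := by
    rw [Matrix.mulVec_mulVec, Matrix.mul_nonsing_inv _ (isUnit_det_transpose_mul_self hs hX),
      Matrix.one_mulVec]
  have h : s ^ 2 * evnorm w ^ 2 ≤ evnorm w * evnorm v :=
    calc s ^ 2 * evnorm w ^ 2 = (s * evnorm w) ^ 2 := by ring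
      _ ≤ evnorm (X *ᵥ w) ^ 2 := pow_le_pow_left₀ (by positivity [evnorm_nonneg w]) (hX w) 2
      _ = w ⬝ᵥ v := by rw [evnorm_mulVec_sq, hw]
      _ ≤ evnorm w * evnorm v := dotProduct_le_evnorm_mul_evnorm w v
  rw [one_div_mul_eq_div, le_div_iff₀ (by positivity)]
  nlinarith [evnorm_nonneg w, evnorm_nonneg v]

lemma evnorm_pinv_mulVec_le (hs : 0 < s) (hX : ∀ v, s * evnorm v ≤ evnorm (X *ᵥ v))
    (v : Fin D → ℝ) : evnorm (((Xᵀ * X)⁻¹ * Xᵀ) *ᵥ v) ≤ 1 / s * evnorm v := by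
  set w := ((Xᵀ * X)⁻¹ * Xᵀ) *ᵥ v
  have hw : (Xᵀ * X) *ᵥ w = Xᵀ *ᵥ v := by
    rw [Matrix.mulVec_mulVec, ← Matrix.mul_assoc,
      Matrix.mul_nonsing_inv _ (isUnit_det_transpose_mul_self hs hX), Matrix.one_mul]
  have h : evnorm (X *ᵥ w) ^ 2 ≤ evnorm (X *ᵥ w) * evnorm v := by
    rw [evnorm_mulVec_sq, hw, Matrix.dotProduct_mulVec, Matrix.vecMul_transpose]
    exact dotProduct_le_evnorm_mul_evnorm _ v
  have hXw : evnorm (X *ᵥ w) ≤ evnorm v := by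
    nlinarith [evnorm_nonneg (X *ᵥ w), evnorm_nonneg v]
  rw [one_div_mul_eq_div, le_div_iff₀ hs, mul_comm]
  exact (hX w).trans hXw

lemma evnorm_mul_inv_mulVec_le (hs : 0 < s) (hX : ∀ v, s * evnorm v ≤ evnorm (X *ᵥ v))
    (v : Fin d → ℝ) : evnorm ((X * (Xᵀ * X)⁻¹) *ᵥ v) ≤ 1 / s * evnorm v := by
  set w := (Xᵀ * X)⁻¹ *ᵥ v
  have hw : (Xᵀ * X) *ᵥ w = v := by
    rw [Matrix.mulVec_mulVec, Matrix.mul_nonsing_inv _ (isUnit_det_transpose_mul_self hs hX),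
      Matrix.one_mulVec]
  have h : evnorm (X *ᵥ w) ^ 2 ≤ (1 / s * evnorm v) ^ 2 :=
    calc evnorm (X *ᵥ w) ^ 2 = w ⬝ᵥ v := by rw [evnorm_mulVec_sq, hw]
      _ ≤ evnorm w * evnorm v := dotProduct_le_evnorm_mul_evnorm w v
      _ ≤ 1 / s ^ 2 * evnorm v * evnorm v :=
        mul_le_mul_of_nonneg_right (evnorm_inv_mulVec_le hs hX v) (evnorm_nonneg v)
      _ = (1 / s * evnorm v) ^ 2 := by ring
  rw [← Matrix.mulVec_mulVec]
  exact (pow_le_pow_iff_left₀ (evnorm_nonneg _) (by positivity [evnorm_nonneg v])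
    two_ne_zero).mp h

end PseudoInverse

section PseudoInverseDifference

variable {D d : ℕ} {X Y : Matrix (Fin D) (Fin d) ℝ}

lemma pinv_sub_pinv_eq (hX : IsUnit (Xᵀ * X).det) (hY : IsUnit (Yᵀ * Y).det) :
    (Xᵀ * X)⁻¹ * Xᵀ - (Yᵀ * Y)⁻¹ * Yᵀ =
      (Xᵀ * X)⁻¹ * (X - Y)ᵀ * (1 - proj Y) -
        (Xᵀ * X)⁻¹ * Xᵀ * (X - Y) * ((Yᵀ * Y)⁻¹ * Yᵀ) := by
  have hXX : (Xᵀ * X)⁻¹ * Xᵀ * X = 1 := by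
    rw [Matrix.mul_assoc, Matrix.nonsing_inv_mul _ hX]
  have hYY : (Xᵀ * X)⁻¹ * Yᵀ * Y * (Yᵀ * Y)⁻¹ = (Xᵀ * X)⁻¹ := by
    rw [Matrix.mul_assoc _ Yᵀ Y, Matrix.mul_assoc, Matrix.mul_nonsing_inv _ hY, Matrix.mul_one]
  simp only [proj, Matrix.mul_sub, Matrix.sub_mul, Matrix.transpose_sub, Matrix.mul_one,
    ← Matrix.mul_assoc, hXX, hYY, Matrix.one_mul]
  abel

theorem frob_pinv_sub_pinv_le {s : ℝ} (hs : 0 < s)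
    (hX : ∀ v, s * evnorm v ≤ evnorm (X *ᵥ v)) (hY : ∀ v, s * evnorm v ≤ evnorm (Y *ᵥ v)) :
    frob ((Xᵀ * X)⁻¹ * Xᵀ - (Yᵀ * Y)⁻¹ * Yᵀ) ≤ 2 / s ^ 2 * frob (X - Y) := by
  have hYdet := isUnit_det_transpose_mul_self hs hY
  have hYpinv : ((Yᵀ * Y)⁻¹ * Yᵀ)ᵀ = Y * (Yᵀ * Y)⁻¹ := by
    rw [Matrix.transpose_mul, Matrix.transpose_transpose, Matrix.transpose_nonsing_inv,
      Matrix.transpose_mul, Matrix.transpose_transpose]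
  have hFirst : frob ((Xᵀ * X)⁻¹ * (X - Y)ᵀ * (1 - proj Y)) ≤ 1 / s ^ 2 * frob (X - Y) :=
    calc _ ≤ 1 * frob ((Xᵀ * X)⁻¹ * (X - Y)ᵀ) := by
          refine frob_mul_le_of_evnorm_transpose_mulVec_le _ _ zero_le_one fun v => ?_
          rw [Matrix.transpose_sub, Matrix.transpose_one, proj_transpose, one_mul]
          exact evnorm_one_sub_proj_mulVec_le hYdet v
      _ ≤ 1 / s ^ 2 * frob (X - Y) := by
          rw [one_mul, ← frob_transpose (X - Y)]
          exact frob_mul_le_of_evnorm_mulVec_le _ _ (by positivity) (evnorm_inv_mulVec_le hs hX)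
  have hSecond : frob ((Xᵀ * X)⁻¹ * Xᵀ * (X - Y) * ((Yᵀ * Y)⁻¹ * Yᵀ)) ≤
      1 / s * (1 / s * frob (X - Y)) :=
    calc _ ≤ 1 / s * frob ((Xᵀ * X)⁻¹ * Xᵀ * (X - Y)) := by
          refine frob_mul_le_of_evnorm_transpose_mulVec_le _ _ (by positivity) fun v => ?_
          rw [hYpinv]
          exact evnorm_mul_inv_mulVec_le hs hY v
      _ ≤ 1 / s * (1 / s * frob (X - Y)) := by
          gcongr
          exact frob_mul_le_of_evnorm_mulVec_le _ _ (by positivity) (evnorm_pinv_mulVec_le hs hX)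
  calc _ ≤ frob ((Xᵀ * X)⁻¹ * (X - Y)ᵀ * (1 - proj Y)) +
        frob ((Xᵀ * X)⁻¹ * Xᵀ * (X - Y) * ((Yᵀ * Y)⁻¹ * Yᵀ)) := by
        rw [pinv_sub_pinv_eq (isUnit_det_transpose_mul_self hs hX) hYdet, frob_eq_norm,
          frob_eq_norm, frob_eq_norm]
        exact norm_sub_le _ _
    _ ≤ 1 / s ^ 2 * frob (X - Y) + 1 / s * (1 / s * frob (X - Y)) :=
        add_le_add hFirst hSecond
    _ = 2 / s ^ 2 * frob (X - Y) := by ring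

end PseudoInverseDifference

theorem stmt16_general {D d : ℕ} (s R : ℝ) (hs : 0 < s) (X Y : Matrix (Fin D) (Fin d) ℝ)
    (hXmin : s ≤ sigmaMin X) (hYmin : s ≤ sigmaMin Y)
    (hXmax : sigmaMax X ≤ R) :
    frob ((Xᵀ * X)⁻¹ * Xᵀ - (Yᵀ * Y)⁻¹ * Yᵀ) ≤
      (1 / s ^ 2 + Real.sqrt 2 * R ^ 2 / s ^ 4) * frob (X - Y) ∧
    sigmaMax ((Xᵀ * X)⁻¹ * Xᵀ) ≤ 1 / s := by
  have hX := mul_evnorm_le_evnorm_mulVec_of_le_sigmaMin hXmin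
  have hY := mul_evnorm_le_evnorm_mulVec_of_le_sigmaMin hYmin
  have hsR : s ≤ R := hXmin.trans ((sigmaMin_le_sigmaMax X).trans hXmax)
  have hcoef : 2 / s ^ 2 ≤ 1 / s ^ 2 + Real.sqrt 2 * R ^ 2 / s ^ 4 := by
    have hsR2 : s ^ 2 ≤ R ^ 2 := pow_le_pow_left₀ hs.le hsR 2
    rw [show 2 / s ^ 2 = 1 / s ^ 2 + 1 / s ^ 2 by ring]
    gcongr 1 / s ^ 2 + ?_
    rw [div_le_div_iff₀ (by positivity) (by positivity)]
    nlinarith [Real.one_lt_sqrt_two, mul_le_mul_of_nonneg_right hsR2 (sq_nonneg s)]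
  exact ⟨(frob_pinv_sub_pinv_le hs hX hY).trans
      (mul_le_mul_of_nonneg_right hcoef (frob_nonneg _)),
    sigmaMax_le_of_evnorm_mulVec_le (by positivity) (evnorm_pinv_mulVec_le hs hX)⟩

theorem stmt16 {D d : ℕ} (s R : ℝ) (hs : 0 < s) (X Y : Matrix (Fin D) (Fin d) ℝ)
    (hXmin : s ≤ sigmaMin X) (hYmin : s ≤ sigmaMin Y)
    (hXmax : sigmaMax X ≤ R) (hYmax : sigmaMax Y ≤ R) :
    frob ((Xᵀ * X)⁻¹ * Xᵀ - (Yᵀ * Y)⁻¹ * Yᵀ) ≤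
      (1 / s ^ 2 + Real.sqrt 2 * R ^ 2 / s ^ 4) * frob (X - Y) ∧
    sigmaMax ((Xᵀ * X)⁻¹ * Xᵀ) ≤ 1 / s :=
  stmt16_general s R hs X Y hXmin hYmin hXmax
end
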